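/- arXiv:1604.04209 — 2 statements merged into one kernel-verified Lean document; each statement's English description precedes it below -/
import Mathlib

section
/- Let $\mathcal{A}$ be an abelian category with enough injectives in which inverse limits over $\mathbb{N}$ exist. An object $(I_n, d_n)$ of the category $\mathcal{A}^{\mathbb{N}}$ of inverse systems indexed by $\mathbb{N}$ is injective if and only if each $I_n$ is injective in $\mathcal{A}$ and each transition map $d_n : I_{n+1} \to I_n$ is a split epimorphism. -/
/-!
Evaluation at `c` has the left adjoint `F_c : a ↦ ∐_{c ⟶ t} a`, and when these coproducts are
finite biproducts `F_c` preserves monomorphisms, so evaluation preserves injectives. For an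
epimorphism `u : c' ⟶ c`, reindexing along `g ↦ u ≫ g` is a monomorphism `F_c a ⟶ F_{c'} a`;
extending the counit `F_c (I c) ⟶ I` along it and transposing gives a section of `I.map u`.

Conversely, to extend `g : X ⟶ I` along a monomorphism `f : X ⟶ Y` when each `Iₙ` is injective
and each `d : Iₙ₊₁ ⟶ Iₙ` has a section `s`, proceed stage by stage: extend `gₙ₊₁` to any `e`, then
`e + (k - e ≫ d) ≫ s` still extends `gₙ₊₁` and lies over the lift `k` built at stage `n`.
-/

open CategoryTheory Limits Opposite

section EvaluationLeftAdjoint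

variable {C : Type*} [Category C] [∀ a b : C, Finite (a ⟶ b)]
  {D : Type*} [Category D] [Preadditive D] [HasFiniteBiproducts D]

instance evaluationLeftAdjoint_preservesMonomorphisms (c : C) :
    (evaluationLeftAdjoint D c).PreservesMonomorphisms where
  preserves {X Y} f _ := by
    have (t : C) : Mono (((evaluationLeftAdjoint D c).map f).app t) := by
      change Mono (Sigma.desc fun h : c ⟶ t => f ≫ Sigma.ι (fun _ => Y) h)
      have e : (Sigma.desc fun h : c ⟶ t => f ≫ Sigma.ι (fun _ => Y) h) =
          Limits.Sigma.map fun _ => f := by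
        apply Sigma.hom_ext
        intro
        simp
      rw [e]
      exact Sigma.map_mono _
    exact NatTrans.mono_of_mono_app _

theorem injective_obj_of_injective (I : C ⥤ D) [Injective I] (c : C) : Injective (I.obj c) :=
  (evaluationAdjunctionRight D c).map_injective I ‹_›

noncomputable def evaluationLeftAdjointPrecomp {c' c : C} (u : c' ⟶ c) (a : D) :
    (evaluationLeftAdjoint D c).obj a ⟶ (evaluationLeftAdjoint D c').obj a where
  app t := (Sigma.map' (u ≫ ·) fun _ => 𝟙 a : (∐ fun _ : c ⟶ t => a) ⟶ ∐ fun _ : c' ⟶ t => a)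
  naturality t t' v := by
    change (Sigma.desc fun g : c ⟶ t => Sigma.ι (fun _ => a) (g ≫ v)) ≫
        Sigma.map' (u ≫ ·) (fun _ => 𝟙 a) =
      Sigma.map' (u ≫ ·) (fun _ => 𝟙 a) ≫ Sigma.desc fun g : c' ⟶ t => Sigma.ι (fun _ => a) (g ≫ v)
    apply Sigma.hom_ext
    intro
    simp

instance mono_evaluationLeftAdjointPrecomp {c' c : C} (u : c' ⟶ c) [Epi u] (a : D) :
    Mono (evaluationLeftAdjointPrecomp u a) := by
  have (t : C) : Mono ((evaluationLeftAdjointPrecomp u a).app t) :=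
    MonoCoprod.mono_map'_of_injective (fun _ : c' ⟶ t => a) (u ≫ ·) fun _ _ => (cancel_epi u).1
  exact NatTrans.mono_of_mono_app _

theorem isSplitEpi_map_of_injective (I : C ⥤ D) [Injective I] {c' c : C} (u : c' ⟶ c) [Epi u] :
    IsSplitEpi (I.map u) := by
  let a := I.obj c
  obtain ⟨ψ, hψ⟩ : ∃ ψ : (evaluationLeftAdjoint D c').obj a ⟶ I,
      evaluationLeftAdjointPrecomp u a ≫ ψ = (evaluationAdjunctionRight D c).counit.app I :=
    Injective.factors _ _
  refine ⟨⟨(evaluationAdjunctionRight D c').unit.app a ≫ ψ.app c', ?_⟩⟩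
  have hι : (evaluationAdjunctionRight D c').unit.app a ≫
        ((evaluationLeftAdjoint D c').obj a).map u =
      (evaluationAdjunctionRight D c).unit.app a ≫ (evaluationLeftAdjointPrecomp u a).app c := by
    simp only [evaluationAdjunctionRight_unit_app]
    change Sigma.ι (fun _ => a) (𝟙 c') ≫
        Sigma.desc (fun g : c' ⟶ c' => Sigma.ι (fun _ => a) (g ≫ u)) =
      Sigma.ι (fun _ => a) (𝟙 c) ≫ Sigma.map' (u ≫ ·) fun _ => 𝟙 a
    simp
  rw [Category.assoc, ← ψ.naturality u, reassoc_of% hι, ← NatTrans.comp_app, hψ]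
  exact (evaluationAdjunctionRight D c).right_triangle_components I

end EvaluationLeftAdjoint

namespace CategoryTheory.Injective

variable {D : Type*} [Category D] [Preadditive D] {X Y J K : D} (f : X ⟶ Y) [Mono f]
  [Injective J] (d : J ⟶ K) [IsSplitEpi d] (g : X ⟶ J) (k : Y ⟶ K)

noncomputable def factorThruOver : Y ⟶ J :=
  factorThru g f + (k - factorThru g f ≫ d) ≫ section_ d

theorem factorThruOver_comp : factorThruOver f d g k ≫ d = k := by
  simp [factorThruOver, Preadditive.add_comp, Preadditive.sub_comp]

theorem comp_factorThruOver (w : f ≫ k = g ≫ d) : f ≫ factorThruOver f d g k = g := by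
  simp [factorThruOver, Preadditive.comp_add, Preadditive.comp_sub, reassoc_of% w]

end CategoryTheory.Injective

section InverseSystem

variable {D : Type*} [Category D] [Preadditive D]
  {X Y I : ℕᵒᵖ ⥤ D} [∀ n : ℕ, Injective (I.obj (op n))]
  [∀ n : ℕ, IsSplitEpi (I.map (homOfLE n.le_succ).op)]
  (f : X ⟶ Y) [∀ n : ℕ, Mono (f.app (op n))] (g : X ⟶ I)

noncomputable def inverseSystemFactorThruApp : ∀ n : ℕ, Y.obj (op n) ⟶ I.obj (op n)
  | 0 => Injective.factorThru (g.app (op 0)) (f.app (op 0))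
  | n + 1 => Injective.factorThruOver (f.app (op (n + 1))) (I.map (homOfLE n.le_succ).op)
      (g.app (op (n + 1))) (Y.map (homOfLE n.le_succ).op ≫ inverseSystemFactorThruApp n)

theorem comp_inverseSystemFactorThruApp :
    ∀ n : ℕ, f.app (op n) ≫ inverseSystemFactorThruApp f g n = g.app (op n)
  | 0 => Injective.comp_factorThru _ _
  | n + 1 => Injective.comp_factorThruOver _ _ _ _ <| by
      rw [← f.naturality_assoc, comp_inverseSystemFactorThruApp n, g.naturality]

omit [∀ n : ℕ, Mono (f.app (op n))] in
theorem injective_of_injective_obj_of_isSplitEpi [HasFiniteBiproducts D] : Injective I :=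
  ⟨fun g f _ =>
    have : ∀ n : ℕ, Mono (f.app (op n)) := fun _ => (NatTrans.mono_iff_mono_app' _ f).1 ‹_› _
    ⟨NatTrans.ofOpSequence (inverseSystemFactorThruApp f g)
      fun n => (Injective.factorThruOver_comp _ _ _ _).symm,
    by ext ⟨n⟩; exact comp_inverseSystemFactorThruApp f g n⟩⟩

end InverseSystem

theorem injective_inverse_system_iff_general (𝒜 : Type*) [Category 𝒜] [Abelian 𝒜]
    (I : ℕᵒᵖ ⥤ 𝒜) :
    Injective I ↔
      (∀ n : ℕ, Injective (I.obj (Opposite.op n))) ∧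
      (∀ n : ℕ, IsSplitEpi (I.map (homOfLE (Nat.le_succ n)).op)) := by
  have := Abelian.hasFiniteBiproducts (C := 𝒜)
  exact ⟨fun _ => ⟨fun n => injective_obj_of_injective I (op n),
      fun n => isSplitEpi_map_of_injective I _⟩,
    fun ⟨_, _⟩ => injective_of_injective_obj_of_isSplitEpi⟩

/-- Let `𝒜` be an abelian category with enough injectives in which
inverse limits over `ℕ` exist.  An inverse system `(Iₙ, dₙ)` (an object of
`ℕᵒᵖ ⥤ 𝒜`) is injective if and only if each `Iₙ` is injective in `𝒜` and each
transition map `dₙ : I_{n+1} → Iₙ` is a split epimorphism. -/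
theorem injective_inverse_system_iff (𝒜 : Type*) [Category 𝒜] [Abelian 𝒜]
    [EnoughInjectives 𝒜] [Limits.HasLimitsOfShape ℕᵒᵖ 𝒜]
    (I : ℕᵒᵖ ⥤ 𝒜) :
    Injective I ↔
      (∀ n : ℕ, Injective (I.obj (Opposite.op n))) ∧
      (∀ n : ℕ, IsSplitEpi (I.map (homOfLE (Nat.le_succ n)).op)) :=
  injective_inverse_system_iff_general 𝒜 I
end

section
/- Let $G$ be a finitely generated free abelian group, $K$ a field, and $\chi : G \to K^\times$ a nontrivial character. Then the group cohomology $H^p(G, K(\chi))$ vanishes for all $p \geq 0$, where $K(\chi)$ denotes $K$ with $G$-action via $\chi$. -/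
/-!
A central element `g` of `G` gives a natural endomorphism `ρ(g)` of every representation, i.e. an
element of the center of the category `Rep K G`. Such an element acts on a projective resolution
`P` of the trivial representation by a lift of the identity, hence by a map homotopic to the
identity, so on `Hⁿ(G, A) = Hⁿ(Hom(P, A))` it induces the identity. By naturality the same map is
postcomposition with `ρ_A(g)`, which on `K(χ)` is multiplication by `χ(g)`. Choosing `g` with
`χ(g) ≠ 1` (every element of an abelian group is central), `χ(g) - 1` is invertible and kills
`Hⁿ(G, K(χ))`.
-/

open CategoryTheory

/-- The one-dimensional representation `K(χ)` of `G` on `K`, where `g ∈ G` acts by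
multiplication by `χ(g)`. -/
noncomputable def charRep {K : Type} [Field K] {G : Type} [CommGroup G]
    (χ : G →* Kˣ) : Representation K G K :=
  (Units.coeHom (Module.End K K)).comp
    ((Units.map (algebraMap K (Module.End K K)).toMonoidHom).comp χ)

open Limits

namespace HomologicalComplex

variable {R C ι : Type*} [Semiring R] [Category C] [Preadditive C] [Linear R C]
  {c : ComplexShape ι}

lemma homologyMap_smul {X Y : HomologicalComplex C c} (r : R) (f : X ⟶ Y) (i : ι)
    [X.HasHomology i] [Y.HasHomology i] :
    homologyMap (r • f) i = r • homologyMap f i :=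
  ShortComplex.homologyMap_smul ((shortComplexFunctor C c i).map f) r

end HomologicalComplex

lemma CategoryTheory.Limits.IsZero.of_smul_id_eq_id {R C : Type*} [Ring R] [Category C]
    [Preadditive C] [Linear R C] {X : C} {r : R} (hr : IsUnit (r - 1))
    (h : r • 𝟙 X = 𝟙 X) : IsZero X := by
  rw [IsZero.iff_id_eq_zero, ← hr.smul_left_cancel, smul_zero, sub_smul, one_smul, h, sub_self]

namespace CategoryTheory.CatCenter

variable {C ι : Type*} [Category C] [HasZeroMorphisms C] (c : ComplexShape ι)

@[simps]
def mapHomologicalComplex (z : CatCenter C) : CatCenter (HomologicalComplex C c) where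
  app K :=
    { f i := z.app (K.X i)
      comm' i j _ := (z.naturality (K.d i j)).symm }
  naturality _ _ φ := by ext i; exact z.naturality (φ.f i)

end CategoryTheory.CatCenter

namespace CategoryTheory.ProjectiveResolution

variable {K C : Type*} [CommRing K] [Category C] [Abelian C] [Linear K C] {X : C}
  (P : ProjectiveResolution X) (z : CatCenter C)

noncomputable def catCenterHomotopyId (hX : z.app X = 𝟙 X) :
    Homotopy ((z.mapHomologicalComplex _).app P.complex) (𝟙 P.complex) :=
  liftHomotopy (𝟙 X) _ _
    (by
      apply HomologicalComplex.hom_ext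
      rintro (_ | n)
      · simp only [HomologicalComplex.comp_f, CatCenter.mapHomologicalComplex_app_f,
          Functor.map_id, Category.comp_id]
        exact (z.naturality _).symm.trans ((congrArg (P.π.f 0 ≫ ·) hX).trans (Category.comp_id _))
      · exact (HomologicalComplex.isZero_single_obj_X _ 0 X (n + 1) (by simp)).eq_of_tgt _ _)
    (by simp)

lemma isZero_homology_linearYonedaObj_of_catCenter (hX : z.app X = 𝟙 X) {A : C} {r : K}
    (hA : z.app A = r • 𝟙 A) (hr : IsUnit (r - 1)) (n : ℕ) :
    IsZero ((P.complex.linearYonedaObj K A).homology n) := by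
  let F := ((linearYoneda K C).obj A).rightOp
  -- `Hom(P, A)`, written through `unopFunctor` so that homotopies of `P` can be transported to it
  let Q :=
    (HomologicalComplex.unopFunctor _ _).obj (.op ((F.mapHomologicalComplex _).obj P.complex))
  let zQ : Q ⟶ Q := (HomologicalComplex.unopFunctor _ _).map
    ((F.mapHomologicalComplex _).map ((z.mapHomologicalComplex _).app P.complex)).op
  have hzQ_smul : zQ = r • 𝟙 Q := by
    ext i (f : P.complex.X i ⟶ A)
    change z.app (P.complex.X i) ≫ f = r • f
    rw [← z.naturality, hA, Linear.comp_smul, Category.comp_id]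
  have hzQ_id : HomologicalComplex.homologyMap zQ n = 𝟙 (Q.homology n) := by
    rw [(F.mapHomotopy (P.catCenterHomotopyId z hX)).unop.homologyMap_eq]
    simp only [Functor.map_id, op_id]
    exact HomologicalComplex.homologyMap_id _ _
  suffices IsZero (Q.homology n) from this
  refine IsZero.of_smul_id_eq_id hr ?_
  calc r • 𝟙 (Q.homology n) = HomologicalComplex.homologyMap (r • 𝟙 Q) n := by
        rw [HomologicalComplex.homologyMap_smul, HomologicalComplex.homologyMap_id]
    _ = 𝟙 (Q.homology n) := by rw [← hzQ_smul, hzQ_id]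

end CategoryTheory.ProjectiveResolution

def Rep.centralAction {k G : Type*} [CommRing k] [Monoid G] {g : G}
    (hg : g ∈ Submonoid.center G) : CatCenter (Rep k G) where
  app X := ofHom (Representation.IntertwiningMap.centralMul X.ρ g hg)
  naturality _ _ f := by ext; exact (hom_comm_apply f g _).symm

universe u

lemma groupCohomology_isZero_of_mem_center_of_smul {k G : Type u} [CommRing k] [Group G]
    {A : Rep k G} {g : G} (hg : g ∈ Submonoid.center G) {r : k}
    (hA : ∀ a : A, A.ρ g a = r • a) (hr : IsUnit (r - 1)) (n : ℕ) :
    IsZero (groupCohomology A n) := by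
  obtain ⟨P⟩ : Nonempty (ProjectiveResolution (Rep.trivial k G k)) := HasProjectiveResolution.out
  refine (P.isZero_homology_linearYonedaObj_of_catCenter (Rep.centralAction hg) ?_ ?_ hr n).of_iso
    (groupCohomologyIso A n P)
  · ext
    exact Rep.trivial_ρ_apply g 1
  · ext x
    exact hA x

theorem groupCohomology_char_nontrivial_isZero_general
    {K : Type} [Field K] {G : Type} [CommGroup G]
    (χ : G →* Kˣ) (hχ : χ ≠ 1) (p : ℕ) :
    Limits.IsZero (groupCohomology (Rep.of (charRep χ)) p) := by
  obtain ⟨g, hg⟩ : ∃ g, χ g ≠ 1 := by simpa [DFunLike.ne_iff] using hχ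
  have hχg : IsUnit ((χ g : K) - 1) := (sub_ne_zero.mpr (Units.val_eq_one.not.mpr hg)).isUnit
  refine groupCohomology_isZero_of_mem_center_of_smul
    (Submonoid.mem_center_iff.mpr fun h => mul_comm h g) (fun a => ?_) hχg p
  simp [charRep]

/-- Let `G` be a finitely generated free abelian group, `K` a field and
`χ : G → Kˣ` a nontrivial character.  Then the group cohomology `Hᵖ(G, K(χ))`
vanishes for all `p ≥ 0`. -/
theorem groupCohomology_char_nontrivial_isZero
    {K : Type} [Field K] {G : Type} [CommGroup G] (r : ℕ)
    (hG : Nonempty (G ≃* Multiplicative (Fin r → ℤ)))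
    (χ : G →* Kˣ) (hχ : χ ≠ 1) (p : ℕ) :
    Limits.IsZero (groupCohomology (Rep.of (charRep χ)) p) :=
  groupCohomology_char_nontrivial_isZero_general χ hχ p
end
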